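/- arXiv:1706.06452 — 2 statements merged into one kernel-verified Lean document; each statement's English description precedes it below -/
import Mathlib

section
/- Let α ∈ R^+∖R_P^+ be a P-cosmall root. Then (α, γ) = 0 for every γ ∈ R_P^+∖I(s_α). -/
/-!
Common setup: a finite crystallographic root system `R` spanning a Euclidean space `E`,
with a base of simple roots, positive roots, Weyl group, Bruhat order, Hecke (Demazure)
product, degrees, greedy decompositions, extended supports, minimal degrees and
generalized cascades of orthogonal roots, following the conventions of the paper.
-/

open scoped RealInnerProductSpace BigOperators

attribute [local instance] Classical.propDecidable

noncomputable section

variable {E : Type} [NormedAddCommGroup E] [InnerProductSpace ℝ E] [FiniteDimensional ℝ E]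

/-- The reflection `s_α` along a root `α` (the orthogonal reflection fixing the
hyperplane orthogonal to `α`). -/
def sRefl (α : E) : E ≃ₗᵢ[ℝ] E := Submodule.reflection (Submodule.span ℝ {α})ᗮ

/-- The coroot `α^∨ = 2α/(α,α)`. -/
def coroot (α : E) : E := (2 / ⟪α, α⟫) • α

/-- `x` is a nonnegative integral combination of elements of `Δ`. -/
def nonnegComb (Δ : Finset E) (x : E) : Prop :=
  ∃ c : E → ℕ, x = ∑ β ∈ Δ, (c β : ℝ) • β

/-- `x` lies in the `ℤ`-span of `T`. -/
def inZSpan (T : Finset E) (x : E) : Prop :=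
  ∃ c : E → ℤ, x = ∑ β ∈ T, (c β : ℝ) • β

/-- A finite crystallographic (reduced) root system spanning `E`, together with a base:
`R` is the set of roots, `simples` the set of simple roots, `pos` the set of positive
roots. -/
structure RootSystemData (E : Type) [NormedAddCommGroup E] [InnerProductSpace ℝ E]
    [FiniteDimensional ℝ E] where
  R : Finset E
  simples : Finset E
  pos : Finset E
  zero_not_mem : (0 : E) ∉ R
  span_top : Submodule.span ℝ (R : Set E) = ⊤
  neg_mem : ∀ α ∈ R, -α ∈ R
  reduced : ∀ α ∈ R, ∀ t : ℝ, t • α ∈ R → t = 1 ∨ t = -1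
  crystallographic : ∀ α ∈ R, ∀ β ∈ R, ∃ n : ℤ, ⟪β, coroot α⟫ = (n : ℝ)
  refl_mem : ∀ α ∈ R, ∀ β ∈ R, sRefl α β ∈ R
  simples_subset : simples ⊆ pos
  pos_subset : pos ⊆ R
  lin_indep : LinearIndependent ℝ (fun β : simples => (β : E))
  pos_iff : ∀ α ∈ R, (α ∈ pos ↔ nonnegComb simples α)
  pos_or_neg : ∀ α ∈ R, α ∈ pos ∨ -α ∈ pos
  coroot_comb : ∀ α ∈ pos, ∃ c : E → ℕ, coroot α = ∑ β ∈ simples, (c β : ℝ) • coroot β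

variable (S : RootSystemData E)

/-- The partial order on roots: `α ≤ α'` iff `α' - α` is a nonnegative combination of
simple roots. -/
def rootLE (α α' : E) : Prop := nonnegComb S.simples (α' - α)

/-- The partial order on coroots: `corootLE S α α'` means `α^∨ ≤ α'^∨` in `ℤΔ^∨`. -/
def corootLE (α α' : E) : Prop :=
  ∃ c : E → ℕ, coroot α' - coroot α = ∑ β ∈ S.simples, (c β : ℝ) • coroot β

/-- The support `Δ(α)` of a root: the set of simple roots `β` with `β ≤ α`. -/
def suppR (α : E) : Finset E := S.simples.filter fun β => rootLE S β α

/-- The root subsystem `R(α)` of `R` generated by the support `Δ(α)`. -/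
def subsysOf (α : E) : Finset E := S.R.filter fun μ => inZSpan (suppR S α) μ

/-- A positive root `φ` is locally high if it is the highest root of `R(φ)`. -/
def IsLocallyHigh (φ : E) : Prop :=
  φ ∈ S.pos ∧ ∀ μ ∈ subsysOf S φ, rootLE S μ φ

/-- Two roots are strongly orthogonal if neither their sum nor their difference lies
in `R ∪ {0}`. -/
def StronglyOrthogonal (α α' : E) : Prop :=
  α + α' ∉ S.R ∧ α - α' ∉ S.R ∧ α + α' ≠ 0 ∧ α - α' ≠ 0

/-- Two sets of roots are totally disjoint if each element of one is strongly
orthogonal to each element of the other. -/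
def TotallyDisjoint (A B : Finset E) : Prop :=
  ∀ a ∈ A, ∀ b ∈ B, StronglyOrthogonal S a b

/-- Adjacency in the Dynkin diagram: distinct and not orthogonal. -/
def DynkinAdj (β β' : E) : Prop := β ≠ β' ∧ ⟪β, β'⟫ ≠ 0

/-- A set of simple roots is connected (as a subset of the Dynkin diagram). -/
def DynkinConnected (C : Finset E) : Prop :=
  ∀ β ∈ C, ∀ β' ∈ C,
    Relation.ReflTransGen (fun x y => x ∈ C ∧ y ∈ C ∧ DynkinAdj x y) β β'

/-- `C` is a connected component of `A` (as subsets of the Dynkin diagram): a maximal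
connected subset of `A`. -/
def IsConnComponent (A C : Finset E) : Prop :=
  C.Nonempty ∧ C ⊆ A ∧ DynkinConnected C ∧
    ∀ C', C ⊆ C' → C' ⊆ A → DynkinConnected C' → C' = C

/-- `R_P^+`, the set of positive roots lying in `ℤΔ_P`. -/
def posP (ΔP : Finset E) : Finset E := S.pos.filter fun γ => inZSpan ΔP γ

/-- The (nonnegative integral) coefficients of the coroot `α^∨` in the basis of simple
coroots. -/
def corootCoeffs (α : E) : E → ℕ :=
  if h : ∃ c : E → ℕ, (∀ β, β ∉ S.simples → c β = 0) ∧
      coroot α = ∑ β ∈ S.simples, (c β : ℝ) • coroot β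
  then h.choose else fun _ => 0

/-- The degree `d(α) = α^∨ + ℤΔ_P^∨`, recorded as the coefficient function on
`Δ ∖ Δ_P` (a degree is an element of `ℤΔ^∨/ℤΔ_P^∨` with nonnegative coefficients,
i.e. a function `Δ ∖ Δ_P → ℕ`). -/
def degOf (ΔP : Finset E) (α : E) : E → ℕ :=
  fun β => if β ∈ ΔP then 0 else corootCoeffs S α β

/-- A degree: a nonnegative coefficient function supported on `Δ ∖ Δ_P`.  Degrees are
ordered coefficientwise (pointwise). -/
def IsDegree (ΔP : Finset E) (d : E → ℕ) : Prop :=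
  ∀ β, β ∉ S.simples \ ΔP → d β = 0

/-- `α` is a maximal root of the degree `d`: a maximal element of
`{α ∈ R⁺ ∖ R_P⁺ : d(α) ≤ d}`. -/
def IsMaxRoot (ΔP : Finset E) (d : E → ℕ) (α : E) : Prop :=
  α ∈ S.pos ∧ α ∉ posP S ΔP ∧ degOf S ΔP α ≤ d ∧
    ∀ α', α' ∈ S.pos → α' ∉ posP S ΔP → degOf S ΔP α' ≤ d → rootLE S α α' → α' = α

/-- A root `α ∈ R⁺ ∖ R_P⁺` is `P`-cosmall if it is a maximal root of the degree
`d(α)`. -/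
def PCosmall (ΔP : Finset E) (α : E) : Prop :=
  IsMaxRoot S ΔP (degOf S ΔP α) α

/-- `IsGreedy S ΔP l d`: the list `l` is a greedy decomposition of the degree `d`. -/
def IsGreedy (S : RootSystemData E) (ΔP : Finset E) : List E → (E → ℕ) → Prop
  | [], d => d = fun _ => 0
  | α :: t, d => IsMaxRoot S ΔP d α ∧ IsGreedy S ΔP t (d - degOf S ΔP α)

/-- The extended support determined by a (greedy) decomposition: the union of the
supports of its entries. -/
def extSuppOf (l : List E) : Finset E := l.foldr (fun α s => suppR S α ∪ s) ∅

/-- The Weyl group: the subgroup of linear isometries generated by the reflections in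
the roots. -/
def weylGroup : Subgroup (E ≃ₗᵢ[ℝ] E) :=
  Subgroup.closure {g | ∃ α ∈ S.R, g = sRefl α}

/-- The inversion set `I(w) = {γ ∈ R⁺ : w(γ) ∈ -R⁺}`. -/
def invSet (w : E ≃ₗᵢ[ℝ] E) : Finset E := S.pos.filter fun γ => -(w γ) ∈ S.pos

/-- The length of a Weyl group element: the cardinality of its inversion set. -/
def len (w : E ≃ₗᵢ[ℝ] E) : ℕ := (invSet S w).card

/-- The Bruhat order on the Weyl group: generated by multiplication by reflections
which increases length. -/
def bruhatLE (u v : E ≃ₗᵢ[ℝ] E) : Prop :=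
  Relation.ReflTransGen (fun x y => (∃ α ∈ S.R, y = x * sRefl α) ∧ len S x < len S y) u v

/-- The support `Δ(w) = {β ∈ Δ : s_β ⪯ w}` of a Weyl group element. -/
def suppW (w : E ≃ₗᵢ[ℝ] E) : Finset E := S.simples.filter fun β => bruhatLE S (sRefl β) w

/-- The Hecke (Demazure) product: `hecke S u v` is the Bruhat-maximum of
`{u'v' : u' ⪯ u, v' ⪯ v}` (this characterizes the usual Hecke product `u · v` defined
via reduced words). -/
def hecke (u v : E ≃ₗᵢ[ℝ] E) : E ≃ₗᵢ[ℝ] E :=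
  if h : ∃ w, (∃ u' v', bruhatLE S u' u ∧ bruhatLE S v' v ∧ w = u' * v') ∧
      ∀ w', (∃ u' v', bruhatLE S u' u ∧ bruhatLE S v' v ∧ w' = u' * v') → bruhatLE S w' w
  then h.choose else u * v

/-- The Hecke product `g₁ · g₂ · … · gₙ` of a list of Weyl group elements. -/
def heckeFold (l : List (E ≃ₗᵢ[ℝ] E)) : E ≃ₗᵢ[ℝ] E := l.foldl (hecke S) 1

/-- The Hecke product `s_{α₁} · … · s_{αᵣ}` of the reflections along a list of roots. -/
def heckeWord (l : List E) : E ≃ₗᵢ[ℝ] E := heckeFold S (l.map sRefl)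

/-- The parabolic subgroup `W_P` of the Weyl group. -/
def parabolicW (ΔP : Finset E) : Subgroup (E ≃ₗᵢ[ℝ] E) :=
  Subgroup.closure {g | ∃ β ∈ ΔP, g = sRefl β}

/-- The longest element `w_P` of the parabolic subgroup `W_P`. -/
def longestWP (ΔP : Finset E) : E ≃ₗᵢ[ℝ] E :=
  if h : ∃ w ∈ parabolicW ΔP, ∀ w' ∈ parabolicW ΔP, len S w' ≤ len S w
  then h.choose else 1

/-- A choice of greedy decomposition of the degree `d` (the greedy decomposition is
unique up to reordering). -/
def greedyOf (ΔP : Finset E) (d : E → ℕ) : List E :=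
  if h : ∃ l, IsGreedy S ΔP l d then h.choose else []

/-- The element `z_d^P`, determined by `z_d^P w_P = s_{α₁} · … · s_{αᵣ} · w_P` for a
greedy decomposition `(α₁, …, αᵣ)` of `d`. -/
def zP (ΔP : Finset E) (d : E → ℕ) : E ≃ₗᵢ[ℝ] E :=
  heckeFold S ((greedyOf S ΔP d).map sRefl ++ [longestWP S ΔP]) * (longestWP S ΔP)⁻¹

/-- `d ∈ Π_P`: `d` is a minimal degree, i.e. a minimal element of
`{d' : z_d^P ⪯ z_{d'}^P}`. -/
def MemPiP (ΔP : Finset E) (d : E → ℕ) : Prop :=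
  IsDegree S ΔP d ∧
    ∀ d', IsDegree S ΔP d' → bruhatLE S (zP S ΔP d) (zP S ΔP d') → d' ≤ d → d' = d

/-- The element `z_e^B = s_{α₁} · … · s_{αᵣ}` (Hecke product) for a greedy
decomposition `(α₁, …, αᵣ)` of the degree `e ∈ H₂(G/B)`. -/
def zB (e : E → ℕ) : E ≃ₗᵢ[ℝ] E := heckeWord S (greedyOf S ∅ e)

/-- `e ∈ Π_B`: `e` is a minimal degree in `H₂(G/B)`. -/
def MemPiB (e : E → ℕ) : Prop :=
  IsDegree S ∅ e ∧
    ∀ e', IsDegree S ∅ e' → bruhatLE S (zB S e) (zB S e') → e' ≤ e → e' = e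

/-- The generalized cascade of orthogonal roots `B_{R,e}`: the set of positive roots
occurring in a greedy decomposition of `e`. -/
def cascade (e : E → ℕ) : Finset E :=
  S.pos.filter fun α => ∃ l, IsGreedy S ∅ l e ∧ α ∈ l

/-- The generalized chain cascade `C_{R,e}(φ) = {α ∈ B_{R,e} : α ≥ φ}`. -/
def chainCascade (e : E → ℕ) (φ : E) : Finset E :=
  (cascade S e).filter fun α => rootLE S φ α

end

/-!
Write `k = ⟨γ, α^∨⟩`. Since `α ∉ R_P`, some simple root `β₀ ∉ Δ_P` occurs in `α` with positive
coefficient, while it does not occur in `γ` (nor in `γ^∨`). If `k > 0`, then `s_α γ = γ - k α` has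
negative `β₀`-coefficient, so `γ ∈ I(s_α)`. If `k < 0`, then `s_γ α = α + n γ` with `n ≥ 1` is a
positive root outside `R_P`, above `α`, and its coroot `s_γ α^∨ ∈ α^∨ + ℝ γ` has the same
degree as `α`; maximality of `α` in its degree forces `s_γ α = α`, which is absurd.
-/

section

variable {E : Type} [NormedAddCommGroup E] [InnerProductSpace ℝ E]

lemma sRefl_apply [FiniteDimensional ℝ E] (α x : E) : sRefl α x = x - ⟪x, coroot α⟫ • α := by
  rw [sRefl, Submodule.reflection_apply, Submodule.starProjection_orthogonal_val,
    Submodule.starProjection_singleton, coroot, real_inner_smul_right, real_inner_comm α x,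
    real_inner_self_eq_norm_sq, RCLike.ofReal_real_eq_id, id]
  match_scalars <;> ring

lemma real_inner_coroot_right (x α : E) : ⟪x, coroot α⟫ = 2 / ⟪α, α⟫ * ⟪x, α⟫ :=
  real_inner_smul_right _ _ _

lemma two_div_real_inner_self_pos {α : E} (hα : α ≠ 0) : 0 < 2 / ⟪α, α⟫ :=
  div_pos two_pos (real_inner_self_pos.mpr hα)

lemma coroot_map {F : Type} [NormedAddCommGroup F] [InnerProductSpace ℝ F] (w : E ≃ₗᵢ[ℝ] F)
    (x : E) :
    coroot (w x) = w (coroot x) := by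
  rw [coroot, coroot, w.inner_map_map, map_smul]

lemma nonnegComb_nsmul {Δ : Finset E} {x : E} (h : nonnegComb Δ x) (n : ℕ) :
    nonnegComb Δ ((n : ℝ) • x) := by
  obtain ⟨c, rfl⟩ := h
  refine ⟨fun β => n * c β, ?_⟩
  simp only [Finset.smul_sum, smul_smul, Nat.cast_mul]

end

namespace RootSystemData

variable {E : Type} [NormedAddCommGroup E] [InnerProductSpace ℝ E] [FiniteDimensional ℝ E]
  (S : RootSystemData E)

lemma ne_zero_of_mem {α : E} (hα : α ∈ S.R) : α ≠ 0 :=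
  fun h => S.zero_not_mem (h ▸ hα)

lemma mem_span_simples {α : E} (hα : α ∈ S.R) :
    α ∈ Submodule.span ℝ (Set.range fun β : S.simples => (β : E)) := by
  have hpos : ∀ μ ∈ S.pos, μ ∈ Submodule.span ℝ (Set.range fun β : S.simples => (β : E)) := by
    intro μ hμ
    obtain ⟨c, rfl⟩ := (S.pos_iff μ (S.pos_subset hμ)).mp hμ
    rw [← Finset.sum_coe_sort]
    exact Submodule.sum_mem _ fun β _ => Submodule.smul_mem _ _ (Submodule.subset_span ⟨β, rfl⟩)
  rcases S.pos_or_neg α hα with h | h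
  · exact hpos α h
  · simpa using Submodule.neg_mem _ (hpos _ h)

noncomputable def simpleBasis : Module.Basis S.simples ℝ E :=
  Module.Basis.mk S.lin_indep <| by
    rw [← S.span_top, Submodule.span_le]
    exact fun α hα => S.mem_span_simples hα

lemma repr_sum_simples (f : E → ℝ) (β : S.simples) :
    S.simpleBasis.repr (∑ b ∈ S.simples, f b • b) β = f β := by
  have : ∑ b ∈ S.simples, f b • b = ∑ i : S.simples, f i • S.simpleBasis i := by
    rw [← Finset.sum_coe_sort]
    simp only [simpleBasis, Module.Basis.mk_apply]
  rw [this, Module.Basis.repr_sum_self]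

lemma repr_nonneg_of_mem_pos {μ : E} (hμ : μ ∈ S.pos) (β : S.simples) :
    0 ≤ S.simpleBasis.repr μ β := by
  obtain ⟨c, hc⟩ := (S.pos_iff μ (S.pos_subset hμ)).mp hμ
  rw [hc, repr_sum_simples]
  exact Nat.cast_nonneg _

lemma mem_pos_of_repr_pos {μ : E} (hμ : μ ∈ S.R) {β : S.simples}
    (h : 0 < S.simpleBasis.repr μ β) : μ ∈ S.pos := by
  refine (S.pos_or_neg μ hμ).resolve_right fun hneg => ?_
  have := S.repr_nonneg_of_mem_pos hneg β
  rw [map_neg, Finsupp.neg_apply] at this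
  linarith

lemma corootCoeffs_spec {μ : E} (hμ : μ ∈ S.pos) :
    (∀ β ∉ S.simples, corootCoeffs S μ β = 0) ∧
      coroot μ = ∑ β ∈ S.simples, (corootCoeffs S μ β : ℝ) • coroot β := by
  obtain ⟨c, hc⟩ := S.coroot_comb μ hμ
  have hex : ∃ c : E → ℕ, (∀ β, β ∉ S.simples → c β = 0) ∧
      coroot μ = ∑ β ∈ S.simples, (c β : ℝ) • coroot β := by
    refine ⟨fun β => if β ∈ S.simples then c β else 0, fun β hβ => by simp [hβ], ?_⟩
    rw [hc]
    exact Finset.sum_congr rfl fun β hβ => by simp [hβ]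
  rw [corootCoeffs, dif_pos hex]
  exact hex.choose_spec

lemma repr_coroot {μ : E} (hμ : μ ∈ S.pos) (β : S.simples) :
    S.simpleBasis.repr (coroot μ) β = corootCoeffs S μ β * (2 / ⟪(β : E), β⟫) := by
  conv_lhs => rw [(S.corootCoeffs_spec hμ).2]
  simp only [coroot, smul_smul]
  rw [repr_sum_simples]

lemma degOf_eq_of_repr_coroot_eq {ΔP : Finset E} {μ ν : E} (hμ : μ ∈ S.pos) (hν : ν ∈ S.pos)
    (h : ∀ β : S.simples, (β : E) ∉ ΔP →
      S.simpleBasis.repr (coroot μ) β = S.simpleBasis.repr (coroot ν) β) :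
    degOf S ΔP μ = degOf S ΔP ν := by
  funext β
  by_cases hP : β ∈ ΔP
  · simp only [degOf, if_pos hP]
  simp only [degOf, if_neg hP]
  by_cases hs : β ∈ S.simples
  · have hβ := h ⟨β, hs⟩ hP
    rw [repr_coroot _ hμ, repr_coroot _ hν] at hβ
    have hβ0 := S.ne_zero_of_mem (S.pos_subset (S.simples_subset hs))
    exact_mod_cast mul_right_cancel₀ (two_div_real_inner_self_pos hβ0).ne' hβ
  · rw [(S.corootCoeffs_spec hμ).1 β hs, (S.corootCoeffs_spec hν).1 β hs]

variable {ΔP : Finset E} (hΔP : ΔP ⊆ S.simples)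
include hΔP

lemma repr_eq_zero_of_inZSpan {x : E} (hx : inZSpan ΔP x) {β : S.simples} (hβ : (β : E) ∉ ΔP) :
    S.simpleBasis.repr x β = 0 := by
  obtain ⟨c, rfl⟩ := hx
  have hsum : ∑ b ∈ ΔP, (c b : ℝ) • b =
      ∑ b ∈ S.simples, (if b ∈ ΔP then (c b : ℝ) else 0) • b := by
    rw [← Finset.sum_subset hΔP fun b _ hb => by simp [hb]]
    exact Finset.sum_congr rfl fun b hb => by simp [hb]
  rw [hsum, repr_sum_simples, if_neg hβ]

lemma exists_repr_pos_of_notMem_posP {α : E} (hα : α ∈ S.pos) (hαP : α ∉ posP S ΔP) :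
    ∃ β : S.simples, (β : E) ∉ ΔP ∧ 0 < S.simpleBasis.repr α β := by
  by_contra! h
  obtain ⟨c, hc⟩ := (S.pos_iff α (S.pos_subset hα)).mp hα
  have hc0 : ∀ b ∈ S.simples, b ∉ ΔP → c b = 0 := fun b hb hbP => by
    have := h ⟨b, hb⟩ hbP
    rw [hc, repr_sum_simples] at this
    exact_mod_cast le_antisymm this (Nat.cast_nonneg _)
  refine hαP (Finset.mem_filter.mpr ⟨hα, fun b => c b, ?_⟩)
  rw [hc, ← Finset.sum_subset hΔP fun b hb hbP => by simp [hc0 b hb hbP]]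
  exact Finset.sum_congr rfl fun b _ => by simp only [Int.cast_natCast]

lemma inner_nonpos_of_notMem_invSet {α γ : E} (hα : α ∈ S.pos) (hαP : α ∉ posP S ΔP)
    (hγ : γ ∈ posP S ΔP) (hinv : γ ∉ invSet S (sRefl α)) : ⟪α, γ⟫ ≤ 0 := by
  obtain ⟨hγpos, hγZ⟩ := Finset.mem_filter.mp hγ
  obtain ⟨β, hβP, hαβ⟩ := S.exists_repr_pos_of_notMem_posP hΔP hα hαP
  have hαR := S.pos_subset hα
  have hsγ : sRefl α γ ∈ S.pos :=
    (S.pos_or_neg _ (S.refl_mem α hαR γ (S.pos_subset hγpos))).resolve_right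
      fun h => hinv (Finset.mem_filter.mpr ⟨hγpos, h⟩)
  have hcoeff := S.repr_nonneg_of_mem_pos hsγ β
  rw [sRefl_apply, map_sub, map_smul, Finsupp.sub_apply, Finsupp.smul_apply,
    S.repr_eq_zero_of_inZSpan hΔP hγZ hβP, smul_eq_mul, zero_sub, neg_nonneg] at hcoeff
  have hk : ⟪γ, coroot α⟫ ≤ 0 := nonpos_of_mul_nonpos_left hcoeff hαβ
  rw [real_inner_coroot_right] at hk
  rw [real_inner_comm]
  exact nonpos_of_mul_nonpos_right hk (two_div_real_inner_self_pos (S.ne_zero_of_mem hαR))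

lemma inner_nonneg_of_pCosmall {α γ : E} (hα : PCosmall S ΔP α) (hγ : γ ∈ posP S ΔP) :
    0 ≤ ⟪α, γ⟫ := by
  obtain ⟨hαpos, hαP, -, hαmax⟩ := hα
  obtain ⟨hγpos, hγZ⟩ := Finset.mem_filter.mp hγ
  obtain ⟨β₀, hβ₀P, hαβ₀⟩ := S.exists_repr_pos_of_notMem_posP hΔP hαpos hαP
  have hαR := S.pos_subset hαpos
  have hγR := S.pos_subset hγpos
  have hγ0 := S.ne_zero_of_mem hγR
  by_contra! hneg
  obtain ⟨m, hm⟩ := S.crystallographic γ hγR α hαR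
  have hm0 : (m : ℝ) < 0 := by
    rw [← hm, real_inner_coroot_right]
    exact mul_neg_of_pos_of_neg (two_div_real_inner_self_pos hγ0) hneg
  obtain ⟨n, rfl⟩ := Int.exists_eq_neg_ofNat (Int.cast_lt_zero.mp hm0).le
  have hB : sRefl γ α = α + (n : ℝ) • γ := by
    rw [sRefl_apply, hm, Int.cast_neg, Int.cast_natCast, neg_smul, sub_neg_eq_add]
  have hBβ₀ : S.simpleBasis.repr (sRefl γ α) β₀ = S.simpleBasis.repr α β₀ := by
    rw [hB, map_add, map_smul, Finsupp.add_apply, Finsupp.smul_apply,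
      S.repr_eq_zero_of_inZSpan hΔP hγZ hβ₀P, smul_zero, add_zero]
  have hBpos : sRefl γ α ∈ S.pos := S.mem_pos_of_repr_pos (S.refl_mem γ hγR α hαR) (hBβ₀ ▸ hαβ₀)
  have hBP : sRefl γ α ∉ posP S ΔP := fun h => by
    have := S.repr_eq_zero_of_inZSpan hΔP (Finset.mem_filter.mp h).2 hβ₀P
    linarith
  have hdeg : degOf S ΔP (sRefl γ α) = degOf S ΔP α :=
    S.degOf_eq_of_repr_coroot_eq hBpos hαpos fun β hβ => by
      rw [coroot_map, sRefl_apply, map_sub, map_smul, Finsupp.sub_apply, Finsupp.smul_apply,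
        S.repr_eq_zero_of_inZSpan hΔP hγZ hβ, smul_zero, sub_zero]
  have hle : rootLE S α (sRefl γ α) := by
    rw [rootLE, hB, add_sub_cancel_left]
    exact nonnegComb_nsmul ((S.pos_iff γ hγR).mp hγpos) n
  have hnγ : (n : ℝ) • γ = 0 := by
    simpa [hB] using hαmax _ hBpos hBP hdeg.le hle
  have hn : (n : ℝ) = 0 := (smul_eq_zero.mp hnγ).resolve_right hγ0
  simp [hn] at hm0

end RootSystemData

/-- Let `α ∈ R⁺ ∖ R_P⁺` be a `P`-cosmall root.  Then `(α, γ) = 0`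
for every `γ ∈ R_P⁺ ∖ I(s_α)`. -/
theorem statement0 {E : Type} [NormedAddCommGroup E] [InnerProductSpace ℝ E]
    [FiniteDimensional ℝ E] (S : RootSystemData E) (ΔP : Finset E)
    (hΔP : ΔP ⊆ S.simples) (α : E) (hα : PCosmall S ΔP α) :
    ∀ γ ∈ posP S ΔP, γ ∉ invSet S (sRefl α) → ⟪α, γ⟫ = 0 := fun γ hγ hinv =>
  le_antisymm (S.inner_nonpos_of_notMem_invSet hΔP hα.1 hα.2.1 hγ hinv)
    (S.inner_nonneg_of_pCosmall hΔP hα hγ)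
end

section
/- Every locally high root is B-cosmall: if φ ∈ R^+ is the highest root of the root subsystem R(φ) generated by Δ(φ), then every α ∈ R^+ satisfying φ ≤ α and α^∨ ≤ φ^∨ (the inequality of coroots taken in ZΔ^∨) equals φ. -/
/-!
Common setup: a finite crystallographic root system `R` spanning a Euclidean space `E`,
with a base of simple roots, positive roots, Weyl group, Bruhat order, Hecke (Demazure)
product, degrees, greedy decompositions, extended supports, minimal degrees and
generalized cascades of orthogonal roots, following the conventions of the paper.
-/

open scoped RealInnerProductSpace BigOperators

attribute [local instance] Classical.propDecidable

/-!
The coefficient of a simple root `β` in `α^∨` is a positive multiple of its coefficient in `α`,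
so the support of a positive root is also the support of its coroot. Hence `α^∨ ≤ φ^∨` forces
`Δ(α) ⊆ Δ(φ)`, i.e. `α ∈ R(φ)`; as `φ` is highest in `R(φ)`, `α ≤ φ ≤ α`.
-/

theorem sum_smul_coroot {E : Type} [NormedAddCommGroup E] [InnerProductSpace ℝ E]
    (T : Finset E) (c : E → ℝ) :
    ∑ β ∈ T, c β • coroot β = ∑ β ∈ T, (c β * (2 / ⟪β, β⟫)) • β := by
  simp only [coroot, smul_smul]

theorem inZSpan.mono {E : Type} [NormedAddCommGroup E] [InnerProductSpace ℝ E]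
    {T T' : Finset E} {x : E} (hx : inZSpan T x) (h : T ⊆ T') : inZSpan T' x := by
  obtain ⟨c, rfl⟩ := hx
  refine ⟨fun β => if β ∈ T then c β else 0, ?_⟩
  rw [← Finset.sum_subset h fun β _ hβ => by simp [hβ]]
  exact Finset.sum_congr rfl fun β hβ => by simp [hβ]

namespace RootSystemData

variable {E : Type} [NormedAddCommGroup E] [InnerProductSpace ℝ E] [FiniteDimensional ℝ E]
  (S : RootSystemData E)

theorem coeff_eq_of_sum_eq {r s : E → ℝ}
    (h : ∑ β ∈ S.simples, r β • β = ∑ β ∈ S.simples, s β • β) {β : E} (hβ : β ∈ S.simples) :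
    r β = s β :=
  (linearIndepOn_finset_iffₛ (v := id)).mp S.lin_indep r s h β hβ

theorem inner_self_ne_zero_of_mem {α : E} (hα : α ∈ S.R) : ⟪α, α⟫ ≠ 0 :=
  inner_self_ne_zero.mpr fun h => S.zero_not_mem (h ▸ hα)

theorem rootLE_antisymm {α α' : E} (h : rootLE S α α') (h' : rootLE S α' α) : α = α' := by
  obtain ⟨e, he⟩ := h
  obtain ⟨d, hd⟩ := h'
  have hsum : ∑ β ∈ S.simples, ((e β : ℝ) + d β) • β = ∑ β ∈ S.simples, (0 : ℝ) • β := by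
    simp only [add_smul, Finset.sum_add_distrib, ← he, ← hd, zero_smul, Finset.sum_const_zero]
    abel
  have he0 : ∀ β ∈ S.simples, e β = 0 := fun β hβ => by
    have := S.coeff_eq_of_sum_eq hsum hβ
    norm_cast at this
    omega
  refine (sub_eq_zero.mp ?_).symm
  rw [he]
  exact Finset.sum_eq_zero fun β hβ => by simp [he0 β hβ]

theorem mem_suppR_iff {α : E} {a : E → ℕ} (ha : α = ∑ β ∈ S.simples, (a β : ℝ) • β) {β : E} :
    β ∈ suppR S α ↔ β ∈ S.simples ∧ a β ≠ 0 := by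
  have hδ : ∀ β ∈ S.simples, β = ∑ γ ∈ S.simples, ((if γ = β then 1 else 0 : ℕ) : ℝ) • γ :=
    fun β hβ => by simp [hβ]
  rw [suppR, Finset.mem_filter]
  refine and_congr_right fun hβ => ?_
  simp only [rootLE, nonnegComb]
  constructor
  · rintro ⟨e, he⟩
    have hsum : α = ∑ γ ∈ S.simples, ((e γ + if γ = β then 1 else 0 : ℕ) : ℝ) • γ := by
      simp only [Nat.cast_add, add_smul, Finset.sum_add_distrib, ← he, ← hδ β hβ]
      abel
    have := S.coeff_eq_of_sum_eq (ha.symm.trans hsum) hβ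
    norm_num at this
    have : a β = e β + 1 := by exact_mod_cast this
    omega
  · intro hne
    refine ⟨fun γ => a γ - if γ = β then 1 else 0, sub_eq_iff_eq_add.mpr ?_⟩
    calc α = ∑ γ ∈ S.simples,
          ((a γ - (if γ = β then 1 else 0) + if γ = β then 1 else 0 : ℕ) : ℝ) • γ := by
          rw [ha]
          refine Finset.sum_congr rfl fun γ _ => ?_
          rw [Nat.sub_add_cancel]
          split_ifs with hγ
          · exact hγ ▸ Nat.one_le_iff_ne_zero.mpr hne
          · exact Nat.zero_le _
      _ = _ := by simp only [Nat.cast_add, add_smul, Finset.sum_add_distrib, ← hδ β hβ]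

/-- Comparing coefficients gives `c β · 2/(β, β) = 2/(α, α) · a β`. -/
theorem coeff_eq_zero_iff_corootCoeff_eq_zero {α : E} (hα : α ∈ S.R) {a c : E → ℝ}
    (ha : α = ∑ β ∈ S.simples, a β • β) (hc : coroot α = ∑ β ∈ S.simples, c β • coroot β)
    {β : E} (hβ : β ∈ S.simples) : a β = 0 ↔ c β = 0 := by
  have hscaled : coroot α = ∑ β ∈ S.simples, (2 / ⟪α, α⟫ * a β) • β := by
    simp only [coroot, ha, Finset.smul_sum, smul_smul]
  rw [sum_smul_coroot] at hc
  have key := S.coeff_eq_of_sum_eq (hc.symm.trans hscaled) hβ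
  have hαα := S.inner_self_ne_zero_of_mem hα
  have hββ := S.inner_self_ne_zero_of_mem (S.pos_subset (S.simples_subset hβ))
  constructor <;> intro h <;> simp_all

theorem suppR_subset_of_corootLE {α φ : E} (hα : α ∈ S.pos) (hφ : φ ∈ S.pos)
    (h : corootLE S α φ) : suppR S α ⊆ suppR S φ := by
  obtain ⟨a, ha⟩ := (S.pos_iff α (S.pos_subset hα)).mp hα
  obtain ⟨b, hb⟩ := (S.pos_iff φ (S.pos_subset hφ)).mp hφ
  obtain ⟨aC, haC⟩ := S.coroot_comb α hα
  obtain ⟨c, hc⟩ := h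
  have hφC : coroot φ = ∑ β ∈ S.simples, ((aC β : ℝ) + c β) • coroot β := by
    rw [eq_add_of_sub_eq hc, haC]
    simp only [add_smul, Finset.sum_add_distrib]
    abel
  intro β hβα
  obtain ⟨hβ, haβ⟩ := (S.mem_suppR_iff ha).mp hβα
  have haCβ : (aC β : ℝ) ≠ 0 :=
    (S.coeff_eq_zero_iff_corootCoeff_eq_zero (S.pos_subset hα) ha haC hβ).not.mp
      (by exact_mod_cast haβ)
  have hbβ : (b β : ℝ) ≠ 0 :=
    (S.coeff_eq_zero_iff_corootCoeff_eq_zero (S.pos_subset hφ) hb hφC hβ).not.mpr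
      (by positivity)
  exact (S.mem_suppR_iff hb).mpr ⟨hβ, by exact_mod_cast hbβ⟩

theorem suppR_subset (α : E) : suppR S α ⊆ S.simples := Finset.filter_subset _ _

theorem inZSpan_suppR {α : E} (hα : α ∈ S.pos) : inZSpan (suppR S α) α := by
  obtain ⟨a, ha⟩ := (S.pos_iff α (S.pos_subset hα)).mp hα
  refine ⟨fun β => a β, ha.trans ?_⟩
  refine (Finset.sum_subset (S.suppR_subset α) fun β hβ hβα => ?_).symm.trans ?_
  · have : a β = 0 := by simpa [S.mem_suppR_iff ha, hβ] using hβα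
    simp [this]
  · simp only [Int.cast_natCast]

end RootSystemData

/-- Every locally high root is `B`-cosmall:  if `φ ∈ R⁺` is the
highest root of the root subsystem `R(φ)` generated by `Δ(φ)`, then every `α ∈ R⁺`
satisfying `φ ≤ α` and `α^∨ ≤ φ^∨` equals `φ`. -/
theorem statement2 {E : Type} [NormedAddCommGroup E] [InnerProductSpace ℝ E]
    [FiniteDimensional ℝ E] (S : RootSystemData E) (φ : E) (hφ : IsLocallyHigh S φ)
    (α : E) (hα : α ∈ S.pos) (h₁ : rootLE S φ α) (h₂ : corootLE S α φ) :
    α = φ := by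
  have hsupp : suppR S α ⊆ suppR S φ := S.suppR_subset_of_corootLE hα hφ.1 h₂
  have hmem : α ∈ subsysOf S φ :=
    Finset.mem_filter.mpr ⟨S.pos_subset hα, (S.inZSpan_suppR hα).mono hsupp⟩
  exact S.rootLE_antisymm (hφ.2 α hmem) h₁
end
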